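/- arXiv:2605.11318 — 3 statements merged into one kernel-verified Lean document; each statement's English description precedes it below -/
import Mathlib

section
/- The rank of the vertically stacked matrix (H_1 ⊗ I_{n2}; I_{n1} ⊗ H_2) over 𝔽_2 equals n_1 n_2 − k_1 k_2, where k_i = n_i − rank(H_i). -/
open Matrix Kronecker

section Aux

open TensorProduct LinearMap

variable {K : Type*} [Field K]
variable {V1 V2 W1 W2 : Type*}
  [AddCommGroup V1] [AddCommGroup V2] [AddCommGroup W1] [AddCommGroup W2]
  [Module K V1] [Module K V2] [Module K W1] [Module K W2]

/-- Over a field, the intersection of `ker (f ⊗ id)` and `ker (id ⊗ g)` is the image of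
`ker f ⊗ ker g`. -/
lemma aux_ker_inf_eq (f : V1 →ₗ[K] W1) (g : V2 →ₗ[K] W2) :
    (ker (rTensor V2 f)) ⊓ (ker (lTensor V1 g)) =
      range (TensorProduct.map (ker f).subtype (ker g).subtype) := by
  apply le_antisymm
  · rintro x ⟨hx1, hx2⟩
    have h1 : ker (rTensor V2 f) = range (rTensor V2 (ker f).subtype) :=
      (LinearMap.exact_iff.mp
        (Module.Flat.rTensor_exact V2 (f.exact_subtype_ker_map)))
    rw [SetLike.mem_coe, h1] at hx1
    obtain ⟨y, rfl⟩ := hx1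
    have hinj : Function.Injective (rTensor W2 (ker f).subtype) :=
      Module.Flat.rTensor_preserves_injective_linearMap _ (Submodule.injective_subtype _)
    have hy0 : lTensor (ker f) g y = 0 := by
      apply hinj
      have : rTensor W2 (ker f).subtype (lTensor (ker f) g y)
          = lTensor V1 g (rTensor V2 (ker f).subtype y) := by
        rw [← LinearMap.comp_apply, ← LinearMap.comp_apply,
          rTensor_comp_lTensor, lTensor_comp_rTensor]
      rw [this]
      simpa using hx2
    have h2 : ker (lTensor (ker f) g) = range (lTensor (ker f) (ker g).subtype) :=
      (LinearMap.exact_iff.mp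
        (Module.Flat.lTensor_exact (ker f : Submodule K V1) (g.exact_subtype_ker_map)))
    rw [← LinearMap.mem_ker, h2] at hy0
    obtain ⟨z, rfl⟩ := hy0
    refine ⟨z, ?_⟩
    rw [← LinearMap.comp_apply, rTensor_comp_lTensor]
  · rintro _ ⟨z, rfl⟩
    constructor
    · show rTensor V2 f (TensorProduct.map (ker f).subtype (ker g).subtype z) = 0
      rw [← LinearMap.comp_apply, rTensor, ← TensorProduct.map_comp,
        comp_ker_subtype, TensorProduct.map_zero_left]
      rfl
    · show lTensor V1 g (TensorProduct.map (ker f).subtype (ker g).subtype z) = 0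
      rw [← LinearMap.comp_apply, lTensor, ← TensorProduct.map_comp,
        comp_ker_subtype, TensorProduct.map_zero_right]
      rfl

lemma aux_finrank_ker_inf [FiniteDimensional K V1] [FiniteDimensional K V2]
    (f : V1 →ₗ[K] W1) (g : V2 →ₗ[K] W2) :
    Module.finrank K ↥((ker (rTensor V2 f)) ⊓ (ker (lTensor V1 g))) =
      Module.finrank K (ker f) * Module.finrank K (ker g) := by
  rw [aux_ker_inf_eq]
  have hinj : Function.Injective (TensorProduct.map (ker f).subtype (ker g).subtype) := by
    rw [← rTensor_comp_lTensor, LinearMap.coe_comp]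
    exact (Module.Flat.rTensor_preserves_injective_linearMap _
        (Submodule.injective_subtype _)).comp
      (Module.Flat.lTensor_preserves_injective_linearMap _ (Submodule.injective_subtype _))
  rw [LinearMap.finrank_range_of_inj hinj, Module.finrank_tensorProduct]

/-- `toLin` in terms of `mulVecLin` and `equivFun`. -/
lemma aux_toLin_eq {ι ι' : Type*} [Fintype ι] [Fintype ι'] [DecidableEq ι]
    (b : Module.Basis ι K V1) (b' : Module.Basis ι' K W1) (M : Matrix ι' ι K) :
    Matrix.toLin b b' M
      = (b'.equivFun.symm : (ι' → K) →ₗ[K] W1) ∘ₗ M.mulVecLin ∘ₗ (b.equivFun : V1 →ₗ[K] (ι → K)) := by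
  apply b.ext
  intro j
  rw [Matrix.toLin_self]
  simp only [LinearMap.comp_apply, LinearEquiv.coe_coe]
  have h1 : b.equivFun (b j) = Pi.single j 1 := by
    ext i; simp [Module.Basis.equivFun_self, Pi.single_apply, eq_comm]
  rw [h1, show M.mulVecLin (Pi.single j 1) = fun i => M i j by
    ext i
    simpa [Matrix.mulVecLin_apply] using congrFun (Matrix.mulVec_single_one M j) i]
  rw [Module.Basis.equivFun_symm_apply]

end Aux

/-- The rank of the stacked matrix (H₁ ⊗ I_{n₂} ; I_{n₁} ⊗ H₂) over 𝔽₂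
equals n₁n₂ − k₁k₂ where kᵢ = nᵢ − rank Hᵢ. -/
theorem tensor_code_rank (m1 n1 m2 n2 : ℕ)
    (H1 : Matrix (Fin m1) (Fin n1) (ZMod 2))
    (H2 : Matrix (Fin m2) (Fin n2) (ZMod 2)) :
    (Matrix.fromRows (H1 ⊗ₖ (1 : Matrix (Fin n2) (Fin n2) (ZMod 2)))
        ((1 : Matrix (Fin n1) (Fin n1) (ZMod 2)) ⊗ₖ H2)).rank
      = n1 * n2 - (n1 - H1.rank) * (n2 - H2.rank) := by
  classical
  set A := H1 ⊗ₖ (1 : Matrix (Fin n2) (Fin n2) (ZMod 2)) with hA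
  set B := (1 : Matrix (Fin n1) (Fin n1) (ZMod 2)) ⊗ₖ H2 with hB
  set M := Matrix.fromRows A B with hM
  -- kernel of the stacked matrix is the intersection of the kernels
  have hkerM : LinearMap.ker M.mulVecLin
      = LinearMap.ker A.mulVecLin ⊓ LinearMap.ker B.mulVecLin := by
    ext x
    simp only [LinearMap.mem_ker, Submodule.mem_inf, Matrix.mulVecLin_apply, hM,
      Matrix.fromRows_mulVec]
    constructor
    · intro h
      constructor
      · ext i; exact congrFun h (Sum.inl i)
      · ext i; exact congrFun h (Sum.inr i)
    · rintro ⟨h1, h2⟩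
      ext (i | i)
      · exact congrFun h1 i
      · exact congrFun h2 i
  -- bases
  let b1 := Pi.basisFun (ZMod 2) (Fin n1)
  let b2 := Pi.basisFun (ZMod 2) (Fin n2)
  let c1 := Pi.basisFun (ZMod 2) (Fin m1)
  let c2 := Pi.basisFun (ZMod 2) (Fin m2)
  let bT := b1.tensorProduct b2
  let bT1 := c1.tensorProduct b2
  let bT2 := b1.tensorProduct c2
  have hLA : Matrix.toLin bT bT1 A
      = LinearMap.rTensor (Fin n2 → ZMod 2) H1.mulVecLin := by
    show Matrix.toLin (b1.tensorProduct b2) (c1.tensorProduct b2) A = _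
    rw [hA, Matrix.toLin_kronecker, Matrix.toLin_one, Matrix.toLin_eq_toLin',
      Matrix.toLin'_apply']
    rfl
  have hLB : Matrix.toLin bT bT2 B
      = LinearMap.lTensor (Fin n1 → ZMod 2) H2.mulVecLin := by
    show Matrix.toLin (b1.tensorProduct b2) (b1.tensorProduct c2) B = _
    rw [hB, Matrix.toLin_kronecker, Matrix.toLin_one, Matrix.toLin_eq_toLin',
      Matrix.toLin'_apply']
    rfl
  have hker2 : LinearMap.ker A.mulVecLin ⊓ LinearMap.ker B.mulVecLin
      = (LinearMap.ker (Matrix.toLin bT bT1 A) ⊓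
          LinearMap.ker (Matrix.toLin bT bT2 B)).map
            (bT.equivFun : TensorProduct (ZMod 2) (Fin n1 → ZMod 2) (Fin n2 → ZMod 2)
              →ₗ[ZMod 2] (Fin n1 × Fin n2 → ZMod 2)) := by
    ext x
    rw [Submodule.mem_map_equiv]
    rw [Submodule.mem_inf, Submodule.mem_inf, LinearMap.mem_ker, LinearMap.mem_ker,
      LinearMap.mem_ker, LinearMap.mem_ker, aux_toLin_eq bT bT1 A, aux_toLin_eq bT bT2 B]
    simp only [LinearMap.comp_apply, LinearEquiv.coe_coe, LinearEquiv.apply_symm_apply,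
      LinearEquiv.map_eq_zero_iff]
  have hfr : Module.finrank (ZMod 2) (LinearMap.ker M.mulVecLin)
      = Module.finrank (ZMod 2) (LinearMap.ker H1.mulVecLin)
        * Module.finrank (ZMod 2) (LinearMap.ker H2.mulVecLin) := by
    rw [hkerM, hker2]
    refine (LinearEquiv.finrank_map_eq bT.equivFun _).trans ?_
    rw [hLA, hLB]
    exact aux_finrank_ker_inf _ _
  have e1 : H1.rank + Module.finrank (ZMod 2) (LinearMap.ker H1.mulVecLin) = n1 := by
    have h := LinearMap.finrank_range_add_finrank_ker H1.mulVecLin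
    rwa [Module.finrank_pi, Fintype.card_fin] at h
  have e2 : H2.rank + Module.finrank (ZMod 2) (LinearMap.ker H2.mulVecLin) = n2 := by
    have h := LinearMap.finrank_range_add_finrank_ker H2.mulVecLin
    rwa [Module.finrank_pi, Fintype.card_fin] at h
  have eM : M.rank + Module.finrank (ZMod 2) (LinearMap.ker H1.mulVecLin)
        * Module.finrank (ZMod 2) (LinearMap.ker H2.mulVecLin) = n1 * n2 := by
    have h := LinearMap.finrank_range_add_finrank_ker M.mulVecLin
    rw [Module.finrank_pi, Fintype.card_prod, Fintype.card_fin, Fintype.card_fin, hfr] at h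
    exact h
  have k1 : n1 - H1.rank = Module.finrank (ZMod 2) (LinearMap.ker H1.mulVecLin) := by omega
  have k2 : n2 - H2.rank = Module.finrank (ZMod 2) (LinearMap.ker H2.mulVecLin) := by omega
  rw [k1, k2]
  exact Nat.eq_sub_of_add_eq eM
end

section
/- rank H_X = m_1 n_2 − (m_1 − rank H_1)(n_2 − rank H_2), where H_X = (H_1 ⊗ I_{n2} | I_{m1} ⊗ H_2^T) over 𝔽_2. -/
open Matrix Kronecker Module


variable {F : Type*} [Field F] {m n : ℕ}

def doubly (K1 : Submodule F (Fin m → F)) (K2 : Submodule F (Fin n → F)) :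
    Submodule F (Fin m × Fin n → F) where
  carrier := {f | (∀ b, (fun i => f (i, b)) ∈ K1) ∧ (∀ i, (fun b => f (i, b)) ∈ K2)}
  add_mem' := fun hf hg => ⟨fun b => K1.add_mem (hf.1 b) (hg.1 b),
    fun i => K2.add_mem (hf.2 i) (hg.2 i)⟩
  zero_mem' := ⟨fun _ => K1.zero_mem, fun _ => K2.zero_mem⟩
  smul_mem' := fun c _ hf => ⟨fun b => K1.smul_mem c (hf.1 b), fun i => K2.smul_mem c (hf.2 i)⟩

theorem mem_doubly {K1 : Submodule F (Fin m → F)} {K2 : Submodule F (Fin n → F)}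
    {f : Fin m × Fin n → F} :
    f ∈ doubly K1 K2 ↔ (∀ b, (fun i => f (i, b)) ∈ K1) ∧ (∀ i, (fun b => f (i, b)) ∈ K2) :=
  Iff.rfl

theorem finrank_doubly (K1 : Submodule F (Fin m → F)) (K2 : Submodule F (Fin n → F)) :
    finrank F (doubly K1 K2) = finrank F K1 * finrank F K2 := by
  set k := finrank F K1 with hk
  set l := finrank F K2 with hl
  let u := Module.finBasis F K1
  let w := Module.finBasis F K2
  let T : ((Fin k × Fin l) → F) →ₗ[F] (Fin m × Fin n → F) :=
    { toFun := fun g p => ∑ a, ∑ c, g (a, c) * (u a : Fin m → F) p.1 * (w c : Fin n → F) p.2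
      map_add' := by
        intro g h; funext p
        simp [add_mul, Finset.sum_add_distrib]
      map_smul' := by
        intro r g; funext p
        simp [Finset.mul_sum, mul_assoc] }
  have key : ∀ g p, T g p
      = ∑ a, (∑ c, g (a, c) * (w c : Fin n → F) p.2) * (u a : Fin m → F) p.1 := by
    intro g p
    rw [show T g p = ∑ a, ∑ c, g (a, c) * (u a : Fin m → F) p.1 * (w c : Fin n → F) p.2 from rfl]
    refine Finset.sum_congr rfl fun a _ => ?_
    rw [Finset.sum_mul]
    exact Finset.sum_congr rfl fun c _ => by ring
  have key2 : ∀ g p, T g p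
      = ∑ c, (∑ a, g (a, c) * (u a : Fin m → F) p.1) * (w c : Fin n → F) p.2 := by
    intro g p
    rw [show T g p = ∑ a, ∑ c, g (a, c) * (u a : Fin m → F) p.1 * (w c : Fin n → F) p.2 from rfl,
      Finset.sum_comm]
    refine Finset.sum_congr rfl fun c _ => ?_
    rw [Finset.sum_mul]
  have hu : LinearIndependent F (fun a => (u a : Fin m → F)) :=
    u.linearIndependent.map' K1.subtype K1.ker_subtype
  have hw : LinearIndependent F (fun c => (w c : Fin n → F)) :=
    w.linearIndependent.map' K2.subtype K2.ker_subtype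
  have hinj : Function.Injective T := by
    rw [← LinearMap.ker_eq_bot, LinearMap.ker_eq_bot']
    intro g hg
    have hcoef : ∀ b a, (∑ c, g (a, c) * (w c : Fin n → F) b) = 0 := by
      intro b
      refine Fintype.linearIndependent_iff.mp hu
        (fun a => ∑ c, g (a, c) * (w c : Fin n → F) b) ?_
      funext i
      rw [Finset.sum_apply]
      simp only [Pi.smul_apply, smul_eq_mul]
      rw [← key g (i, b)]
      exact congrFun hg (i, b)
    funext p
    obtain ⟨a, c⟩ := p
    refine Fintype.linearIndependent_iff.mp hw (fun c => g (a, c)) ?_ c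
    funext b
    rw [Finset.sum_apply]
    simpa using hcoef b a
  have hrange : LinearMap.range T = doubly K1 K2 := by
    apply le_antisymm
    · rintro _ ⟨g, rfl⟩
      refine ⟨fun b => ?_, fun i => ?_⟩
      · have : (fun i => T g (i, b))
            = ∑ a, (∑ c, g (a, c) * (w c : Fin n → F) b) • ((u a : Fin m → F)) := by
          funext i
          rw [Finset.sum_apply]
          simp only [Pi.smul_apply, smul_eq_mul]
          exact key g (i, b)
        rw [this]
        exact K1.sum_mem fun a _ => K1.smul_mem _ (u a).2
      · have : (fun b => T g (i, b))
            = ∑ c, (∑ a, g (a, c) * (u a : Fin m → F) i) • ((w c : Fin n → F)) := by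
          funext b
          rw [Finset.sum_apply]
          simp only [Pi.smul_apply, smul_eq_mul]
          exact key2 g (i, b)
        rw [this]
        exact K2.sum_mem fun c _ => K2.smul_mem _ (w c).2
    · intro f hf
      obtain ⟨hcol, hrow⟩ := hf
      let v : Fin n → K1 := fun b => ⟨fun i => f (i, b), hcol b⟩
      have claim1 : ∀ i b, f (i, b) = ∑ a, (u.repr (v b) a) * (u a : Fin m → F) i := by
        intro i b
        have h := congrArg Subtype.val (u.sum_repr (v b))
        have h2 := congrFun h i
        simp only [Submodule.coe_sum] at h2
        rw [Finset.sum_apply] at h2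
        simp only [SetLike.val_smul, Pi.smul_apply, smul_eq_mul] at h2
        exact (h2).symm
      have claim2 : ∀ a, (fun b => u.repr (v b) a) ∈ K2 := by
        intro a
        obtain ⟨q, hq⟩ := K1.exists_isCompl
        let π := K1.linearProjOfIsCompl q hq
        let φ : (Fin m → F) →ₗ[F] F :=
          (Finsupp.lapply a).comp ((u.repr : K1 →ₗ[F] (Fin k →₀ F)).comp π)
        have hφ : ∀ b, u.repr (v b) a = φ (fun i => f (i, b)) := by
          intro b
          have : π ((fun i => f (i, b)) : Fin m → F) = v b := by
            exact Submodule.linearProjOfIsCompl_apply_left hq (v b)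
          simp only [φ, LinearMap.comp_apply, this]
          rfl
        have hrw : (fun b => u.repr (v b) a)
            = ∑ i, φ (fun j => if i = j then 1 else 0) • (fun b => f (i, b)) := by
          funext b
          rw [Finset.sum_apply]
          rw [hφ b, LinearMap.pi_apply_eq_sum_univ φ (fun i => f (i, b))]
          simp [mul_comm]
        rw [hrw]
        exact K2.sum_mem fun i _ => K2.smul_mem _ (hrow i)
      let cfun : Fin k → K2 := fun a => ⟨fun b => u.repr (v b) a, claim2 a⟩
      refine ⟨fun p => w.repr (cfun p.1) p.2, ?_⟩
      funext p
      obtain ⟨i, b⟩ := p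
      rw [key _ (i, b)]
      have hc : ∀ a, (∑ c, w.repr (cfun a) c * (w c : Fin n → F) b) = u.repr (v b) a := by
        intro a
        have h := congrArg Subtype.val (w.sum_repr (cfun a))
        have h2 := congrFun h b
        simp only [Submodule.coe_sum] at h2
        rw [Finset.sum_apply] at h2
        simp only [SetLike.val_smul, Pi.smul_apply, smul_eq_mul] at h2
        exact h2
      calc (∑ a, (∑ c, w.repr (cfun a) c * (w c : Fin n → F) b) * (u a : Fin m → F) i)
          = ∑ a, (u.repr (v b) a) * (u a : Fin m → F) i :=
            Finset.sum_congr rfl fun a _ => by rw [hc a]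
        _ = f (i, b) := (claim1 i b).symm
  rw [← hrange, LinearMap.finrank_range_of_inj hinj, Module.finrank_fintype_fun_eq_card,
    Fintype.card_prod, Fintype.card_fin, Fintype.card_fin]

theorem kron_one_mulVec_eq_zero (p : ℕ) (A : Matrix (Fin p) (Fin m) F) (f : Fin m × Fin n → F) :
    (A ⊗ₖ (1 : Matrix (Fin n) (Fin n) F)) *ᵥ f = 0
      ↔ ∀ b, (fun i => f (i, b)) ∈ LinearMap.ker A.mulVecLin := by
  simp only [funext_iff, Prod.forall, Pi.zero_apply, LinearMap.mem_ker, mulVecLin_apply,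
    mulVec, dotProduct, kroneckerMap_apply, Fintype.sum_prod_type, Matrix.one_apply,
    mul_ite, ite_mul, mul_one, mul_zero, zero_mul, Finset.sum_ite_eq, Finset.mem_univ,
    if_true]
  exact forall_comm

theorem one_kron_mulVec_eq_zero (q : ℕ) (B : Matrix (Fin q) (Fin n) F) (f : Fin m × Fin n → F) :
    ((1 : Matrix (Fin m) (Fin m) F) ⊗ₖ B) *ᵥ f = 0
      ↔ ∀ i, (fun b => f (i, b)) ∈ LinearMap.ker B.mulVecLin := by
  simp only [funext_iff, Prod.forall, Pi.zero_apply, LinearMap.mem_ker, mulVecLin_apply,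
    mulVec, dotProduct, kroneckerMap_apply, Fintype.sum_prod_type, Matrix.one_apply,
    mul_ite, ite_mul, mul_one, mul_zero, zero_mul, one_mul, Finset.sum_ite_irrel,
    Finset.sum_const_zero, Finset.sum_ite_eq, Finset.mem_univ, if_true]


/-- rank H_X = m₁n₂ − (m₁ − rank H₁)(n₂ − rank H₂), where
H_X = (H₁ ⊗ I_{n₂} | I_{m₁} ⊗ H₂ᵀ) over 𝔽₂. -/
theorem hgp_HX_rank (m1 n1 m2 n2 : ℕ)
    (H1 : Matrix (Fin m1) (Fin n1) (ZMod 2))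
    (H2 : Matrix (Fin m2) (Fin n2) (ZMod 2)) :
    (Matrix.fromCols (H1 ⊗ₖ (1 : Matrix (Fin n2) (Fin n2) (ZMod 2)))
        ((1 : Matrix (Fin m1) (Fin m1) (ZMod 2)) ⊗ₖ H2ᵀ)).rank
      = m1 * n2 - (m1 - H1.rank) * (n2 - H2.rank) := by
  classical
  rw [← Matrix.rank_transpose, Matrix.transpose_fromCols,
    ← Matrix.kroneckerMap_transpose, ← Matrix.kroneckerMap_transpose,
    Matrix.transpose_one, Matrix.transpose_one, Matrix.transpose_transpose]
  set K1 := LinearMap.ker H1ᵀ.mulVecLin with hK1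
  set K2 := LinearMap.ker H2.mulVecLin with hK2
  set M := fromRows (H1ᵀ ⊗ₖ (1 : Matrix (Fin n2) (Fin n2) (ZMod 2)))
    ((1 : Matrix (Fin m1) (Fin m1) (ZMod 2)) ⊗ₖ H2) with hM
  have hker : LinearMap.ker M.mulVecLin = doubly K1 K2 := by
    ext f
    rw [LinearMap.mem_ker, mulVecLin_apply, hM, fromRows_mulVec, mem_doubly]
    constructor
    · intro h
      have h1 : (H1ᵀ ⊗ₖ (1 : Matrix (Fin n2) (Fin n2) (ZMod 2))) *ᵥ f = 0 := by
        funext x; exact congrFun h (Sum.inl x)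
      have h2 : ((1 : Matrix (Fin m1) (Fin m1) (ZMod 2)) ⊗ₖ H2) *ᵥ f = 0 := by
        funext x; exact congrFun h (Sum.inr x)
      exact ⟨(kron_one_mulVec_eq_zero _ _ _).mp h1, (one_kron_mulVec_eq_zero _ _ _).mp h2⟩
    · rintro ⟨h1, h2⟩
      rw [(kron_one_mulVec_eq_zero _ H1ᵀ f).mpr h1, (one_kron_mulVec_eq_zero _ H2 f).mpr h2]
      funext x; cases x <;> rfl
  have hrn := LinearMap.finrank_range_add_finrank_ker M.mulVecLin
  rw [hker, finrank_doubly, Module.finrank_fintype_fun_eq_card, Fintype.card_prod,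
    Fintype.card_fin, Fintype.card_fin] at hrn
  have hrn1 := LinearMap.finrank_range_add_finrank_ker H1ᵀ.mulVecLin
  rw [← hK1] at hrn1
  rw [Module.finrank_fintype_fun_eq_card, Fintype.card_fin] at hrn1
  have hrt : H1ᵀ.rank = H1.rank := Matrix.rank_transpose H1
  have hrn2 := LinearMap.finrank_range_add_finrank_ker H2.mulVecLin
  rw [← hK2] at hrn2
  rw [Module.finrank_fintype_fun_eq_card, Fintype.card_fin] at hrn2
  have e1 : m1 - H1.rank = finrank (ZMod 2) K1 := by
    rw [← hrt]; change Matrix.rank H1ᵀ + _ = _ at hrn1; omega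
  have e2 : n2 - H2.rank = finrank (ZMod 2) K2 := by
    change Matrix.rank H2 + _ = _ at hrn2; omega
  rw [e1, e2]
  change Matrix.rank M + _ = _ at hrn
  omega
end

section
/- No row of G_X^B = (E_1 ⊗ G_2 | 0) lies in the row space of H_X = (H_1 ⊗ I_{n2} | I_{m1} ⊗ H_2^T), provided each row of E_1 is not in the row space of H_1 and each row of G_2 is nonzero. Hence the canonical logical X operators are nontrivial. -/
open Matrix Kronecker

/-- No row of G_X^B = (E₁ ⊗ G₂ | 0) lies in the row space of
H_X = (H₁ ⊗ I_{n₂} | I_{m₁} ⊗ H₂ᵀ), provided each row of E₁ is not in the row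
space of H₁ and each row of G₂ is nonzero. -/
theorem logical_X_nontrivial (m1 n1 m2 n2 k1 k2 : ℕ)
    (H1 : Matrix (Fin m1) (Fin n1) (ZMod 2))
    (H2 : Matrix (Fin m2) (Fin n2) (ZMod 2))
    (G2 : Matrix (Fin k2) (Fin n2) (ZMod 2))
    (E1 : Matrix (Fin k1) (Fin n1) (ZMod 2))
    (hE1 : ∀ i, E1 i ∉ Submodule.span (ZMod 2) (Set.range H1))
    (hG2 : ∀ i, G2 i ≠ 0) :
    ∀ p : Fin k1 × Fin k2,
      (Matrix.fromCols (E1 ⊗ₖ G2)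
          (0 : Matrix (Fin k1 × Fin k2) (Fin m1 × Fin m2) (ZMod 2))) p ∉
        Submodule.span (ZMod 2)
          (Set.range (Matrix.fromCols (H1 ⊗ₖ (1 : Matrix (Fin n2) (Fin n2) (ZMod 2)))
            ((1 : Matrix (Fin m1) (Fin m1) (ZMod 2)) ⊗ₖ H2ᵀ))) := by
  rintro ⟨i, j⟩ hmem
  -- pick a coordinate t where G2 j is nonzero
  obtain ⟨t, ht⟩ : ∃ t, G2 j t ≠ 0 := by
    by_contra h
    push_neg at h
    exact hG2 j (funext h)
  have ht1 : G2 j t = 1 := by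
    revert ht; generalize G2 j t = x; revert x; decide
  -- the linear map restricting to the column slice (·, t) in the left block
  set φ : (((Fin n1 × Fin n2) ⊕ (Fin m1 × Fin m2)) → ZMod 2) →ₗ[ZMod 2]
      (Fin n1 → ZMod 2) :=
    LinearMap.funLeft (ZMod 2) (ZMod 2) (fun x => Sum.inl (x, t)) with hφ
  have himg : φ ((Matrix.fromCols (E1 ⊗ₖ G2)
      (0 : Matrix (Fin k1 × Fin k2) (Fin m1 × Fin m2) (ZMod 2))) (i, j)) ∈
      Submodule.span (ZMod 2)
        (φ '' (Set.range (Matrix.fromCols (H1 ⊗ₖ (1 : Matrix (Fin n2) (Fin n2) (ZMod 2)))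
            ((1 : Matrix (Fin m1) (Fin m1) (ZMod 2)) ⊗ₖ H2ᵀ)))) := by
    rw [← Submodule.map_span]
    exact Submodule.mem_map_of_mem hmem
  have h1 : φ ((Matrix.fromCols (E1 ⊗ₖ G2)
      (0 : Matrix (Fin k1 × Fin k2) (Fin m1 × Fin m2) (ZMod 2))) (i, j)) = E1 i := by
    funext x
    simp [hφ, LinearMap.funLeft, Matrix.fromCols, Matrix.kroneckerMap_apply, ht1]
  have h2 : Submodule.span (ZMod 2)
      (φ '' (Set.range (Matrix.fromCols (H1 ⊗ₖ (1 : Matrix (Fin n2) (Fin n2) (ZMod 2)))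
          ((1 : Matrix (Fin m1) (Fin m1) (ZMod 2)) ⊗ₖ H2ᵀ)))) ≤
      Submodule.span (ZMod 2) (Set.range H1) := by
    rw [Submodule.span_le]
    rintro _ ⟨_, ⟨⟨a, b⟩, rfl⟩, rfl⟩
    have : φ ((Matrix.fromCols (H1 ⊗ₖ (1 : Matrix (Fin n2) (Fin n2) (ZMod 2)))
        ((1 : Matrix (Fin m1) (Fin m1) (ZMod 2)) ⊗ₖ H2ᵀ)) (a, b)) =
        ((1 : Matrix (Fin n2) (Fin n2) (ZMod 2)) b t) • H1 a := by
      funext x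
      simp [hφ, LinearMap.funLeft, Matrix.fromCols, Matrix.kroneckerMap_apply, mul_comm]
    rw [this]
    exact Submodule.smul_mem _ _ (Submodule.subset_span ⟨a, rfl⟩)
  rw [h1] at himg
  exact hE1 i (h2 himg)
end
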